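/- Let g : ℝ^d → ℝ be convex, v ∈ ℝ, and p a minimizer of g over the hyperplane {x : x_1 = v}, i.e. g(p) ≤ g(x) for all x ∈ ℝ^d with x_1 = v. If p is not a global minimizer of g, then every global minimizer lies strictly on one side of the hyperplane: either all global minimizers x satisfy x_1 < v or all satisfy x_1 > v. -/
import Mathlib


theorem hyperplane_min_global_or_one_side (d : ℕ) (g : (Fin (d + 1) → ℝ) → ℝ)
    (hg : ConvexOn ℝ Set.univ g) (v : ℝ)
    (p : Fin (d + 1) → ℝ) (hp0 : p 0 = v)
    (hpmin : ∀ x : Fin (d + 1) → ℝ, x 0 = v → g p ≤ g x) :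
    ((¬ ∃ x : Fin (d + 1) → ℝ, g x < g p) → ∀ x, g p ≤ g x)
    ∧ ((∃ x : Fin (d + 1) → ℝ, g x < g p) →
        (∀ x : Fin (d + 1) → ℝ, (∀ z, g x ≤ g z) → x 0 < v)
        ∨ (∀ x : Fin (d + 1) → ℝ, (∀ z, g x ≤ g z) → v < x 0)) := by
  constructor
  · intro h x
    push_neg at h
    exact h x
  · rintro ⟨w, hw⟩
    -- any global minimizer has coordinate ≠ v
    have hne : ∀ x : Fin (d + 1) → ℝ, (∀ z, g x ≤ g z) → x 0 ≠ v := by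
      intro x hx hxv
      exact absurd (lt_of_le_of_lt (hx w) hw) (not_lt.2 (hpmin x hxv))
    -- no two minimizers on opposite sides
    have key : ∀ x y : Fin (d + 1) → ℝ, (∀ z, g x ≤ g z) → (∀ z, g y ≤ g z) →
        x 0 < v → v < y 0 → False := by
      intro x y hx hy hxv hyv
      set t : ℝ := (v - x 0) / (y 0 - x 0) with ht
      have hden : (0:ℝ) < y 0 - x 0 := by linarith
      have ht0 : 0 < t := div_pos (by linarith) hden
      have ht1 : t < 1 := (div_lt_one hden).2 (by linarith)
      set z : Fin (d + 1) → ℝ := (1 - t) • x + t • y with hz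
      have hz0 : z 0 = v := by
        simp only [hz, Pi.add_apply, Pi.smul_apply, smul_eq_mul]
        have : t * (y 0 - x 0) = v - x 0 := by
          rw [ht]; field_simp
        linear_combination this
      have hconv := hg.2 (Set.mem_univ x) (Set.mem_univ y)
        (by linarith : (0:ℝ) ≤ 1 - t) ht0.le (by ring)
      have hxy : g x = g y := le_antisymm (hx y) (hy x)
      have hgz : g z ≤ g x := by
        calc g z ≤ (1 - t) * g x + t * g y := hconv
        _ = g x := by rw [hxy]; ring
      have : g p ≤ g z := hpmin z hz0
      have : g x < g p := lt_of_le_of_lt (hx w) hw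
      linarith
    by_cases h : ∀ x : Fin (d + 1) → ℝ, (∀ z, g x ≤ g z) → x 0 < v
    · exact Or.inl h
    · push_neg at h
      obtain ⟨x, hx, hxv⟩ := h
      have hxv' : v < x 0 := lt_of_le_of_ne hxv (Ne.symm (hne x hx))
      refine Or.inr fun y hy => ?_
      rcases lt_or_gt_of_ne (hne y hy) with hlt | hgt
      · exact absurd (key y x hy hx hlt hxv') id
      · exact hgt
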